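/- arXiv:2212.03542 — 2 statements merged into one kernel-verified Lean document; each statement's English description precedes it below -/
import Mathlib

section
/- Let w : (0,∞) → (0,∞) be an admissible weight, i.e., w is monotonic on (0,1], constant equal to w(1) on [1,∞), and there exist constants c,d > 0 such that c·w(2^{-j}) ≤ w(2^{-2j}) ≤ d·w(2^{-j}) for all natural numbers j. Then there exist constants C₁, C₂ > 0 and b ≥ 0 such that C₁·(1 + j - k)^{-b} ≤ w(2^{-j})/w(2^{-k}) ≤ C₂·(1 + j - k)^{b} for all natural numbers j ≥ k. -/
private lemma iter_dbl (a : ℕ → ℝ) (c : ℝ) (hc : 0 < c)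
    (hdbl : ∀ n, c * a n ≤ a (2 * n)) :
    ∀ m k, c ^ m * a k ≤ a (2 ^ m * k) := by
  intro m
  induction m with
  | zero => intro k; simp
  | succ m ih =>
    intro k
    have h1 : c ^ (m + 1) * a k = c * (c ^ m * a k) := by ring
    have h2 : c * (c ^ m * a k) ≤ c * a (2 ^ m * k) :=
      mul_le_mul_of_nonneg_left (ih k) hc.le
    have h3 : c * a (2 ^ m * k) ≤ a (2 * (2 ^ m * k)) := hdbl _
    have h4 : 2 * (2 ^ m * k) = 2 ^ (m + 1) * k := by ring
    rw [h1, ← h4]; exact h2.trans h3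

private lemma key_lemma (a : ℕ → ℝ) (hpos : ∀ n, 0 < a n)
    (hanti : ∀ n m : ℕ, n ≤ m → a m ≤ a n)
    (c : ℝ) (hc : 0 < c) (hc1 : c ≤ 1)
    (hdbl : ∀ n, c * a n ≤ a (2 * n)) :
    ∀ j k : ℕ, 1 ≤ k → k ≤ j →
      a k ≤ (2:ℝ) ^ (Real.logb 2 c⁻¹) * (1 + (j:ℝ) - (k:ℝ)) ^ (Real.logb 2 c⁻¹) * a j := by
  intro j k hk1 hkj
  set b := Real.logb 2 c⁻¹ with hbdef
  have hcinv1 : 1 ≤ c⁻¹ := one_le_inv_iff₀.mpr ⟨hc, hc1⟩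
  have hb0 : 0 ≤ b := Real.logb_nonneg one_lt_two hcinv1
  have hcinv : c⁻¹ = (2:ℝ) ^ b := (Real.rpow_logb two_pos (by norm_num) (inv_pos.mpr hc)).symm
  obtain ⟨q, hq⟩ : ∃ q : ℕ, q = (j - 1) / k + 1 := ⟨_, rfl⟩
  have hk0 : 0 < k := hk1
  have hjq : j ≤ q * k := by
    have hlt : (j - 1) / k < q := by omega
    have h := (Nat.div_lt_iff_lt_mul hk0).mp hlt
    omega
  obtain ⟨m, hm⟩ : ∃ m : ℕ, m = Nat.clog 2 q := ⟨_, rfl⟩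
  have hqm : q ≤ 2 ^ m := hm ▸ Nat.le_pow_clog one_lt_two q
  have hjm : j ≤ 2 ^ m * k := hjq.trans (Nat.mul_le_mul_right k hqm)
  have h3 : c ^ m * a k ≤ a j := (iter_dbl a c hc hdbl m k).trans (hanti j (2 ^ m * k) hjm)
  have hcm : (0:ℝ) < c ^ m := pow_pos hc m
  have h4 : a k ≤ (c⁻¹) ^ m * a j := by
    rw [inv_pow, inv_mul_eq_div, le_div_iff₀ hcm, mul_comm]
    exact h3
  -- nat bound on 2^m
  have hpow : (2:ℕ) ^ m ≤ 2 * (1 + (j - k)) := by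
    rcases Nat.lt_or_ge q 2 with hq2 | hq2
    · have hq0 : 1 ≤ q := hq ▸ Nat.succ_le_succ (Nat.zero_le _)
      have hq1 : q = 1 := by omega
      have : m = 0 := by rw [hm, hq1]; exact Nat.clog_one_right 2
      rw [this, pow_zero]; omega
    · have hm1 : 2 ^ (m - 1) < q := hm ▸ Nat.pow_pred_clog_lt_self one_lt_two hq2
      have hm0 : 0 < m := hm ▸ Nat.clog_pos one_lt_two hq2
      have hsplit : 2 ^ m = 2 * 2 ^ (m - 1) := by
        conv_lhs => rw [show m = (m - 1) + 1 by omega]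
        ring
      have hq1 : (j - 1) / k ≤ 1 + (j - k) := by
        rw [Nat.div_le_iff_le_mul_add_pred hk0]
        have h5 : j - k ≤ k * (j - k) := Nat.le_mul_of_pos_left _ hk0
        have h6 : k * (1 + (j - k)) = k + k * (j - k) := by ring
        omega
      omega
  -- to reals
  have hXpos : (0:ℝ) < 1 + (j:ℝ) - (k:ℝ) := by
    have : (k:ℝ) ≤ (j:ℝ) := Nat.cast_le.mpr hkj
    linarith
  have hcast : ((2:ℝ))^m ≤ 2 * (1 + (j:ℝ) - (k:ℝ)) := by
    have h := (Nat.cast_le (α := ℝ)).mpr hpow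
    push_cast [Nat.cast_sub hkj] at h
    linarith
  have h5 : (c⁻¹) ^ m = ((2:ℝ) ^ m) ^ b := by
    rw [hcinv, ← Real.rpow_natCast ((2:ℝ) ^ b) m, ← Real.rpow_mul (by norm_num),
      mul_comm, Real.rpow_mul (by norm_num), Real.rpow_natCast]
  have h6 : ((2:ℝ) ^ m) ^ b ≤ (2 * (1 + (j:ℝ) - (k:ℝ))) ^ b :=
    Real.rpow_le_rpow (by positivity) hcast hb0
  have h7 : (2 * (1 + (j:ℝ) - (k:ℝ))) ^ b = (2:ℝ) ^ b * (1 + (j:ℝ) - (k:ℝ)) ^ b :=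
    Real.mul_rpow (by norm_num) hXpos.le
  calc a k ≤ (c⁻¹) ^ m * a j := h4
    _ ≤ (2:ℝ) ^ b * (1 + (j:ℝ) - (k:ℝ)) ^ b * a j := by
        apply mul_le_mul_of_nonneg_right _ (hpos j).le
        rw [h5, ← h7]; exact h6

private lemma key_lemma' (a : ℕ → ℝ) (hpos : ∀ n, 0 < a n)
    (hanti : ∀ n m : ℕ, n ≤ m → a m ≤ a n)
    (c : ℝ) (hc : 0 < c) (hc1 : c ≤ 1)
    (hdbl : ∀ n, c * a n ≤ a (2 * n)) :
    ∀ j k : ℕ, k ≤ j →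
      a k ≤ ((2:ℝ) ^ (Real.logb 2 c⁻¹) * max 1 (a 0 / a 1)) *
        (1 + (j:ℝ) - (k:ℝ)) ^ (Real.logb 2 c⁻¹) * a j := by
  intro j k hkj
  set b := Real.logb 2 c⁻¹ with hbdef
  have hb0 : 0 ≤ b := Real.logb_nonneg one_lt_two (one_le_inv_iff₀.mpr ⟨hc, hc1⟩)
  have h2b : (1:ℝ) ≤ (2:ℝ) ^ b := Real.one_le_rpow one_le_two hb0
  set M : ℝ := max 1 (a 0 / a 1) with hMdef
  have hM : (1:ℝ) ≤ M := le_max_left _ _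
  have hjk : (k:ℝ) ≤ (j:ℝ) := Nat.cast_le.mpr hkj
  have hX1 : (1:ℝ) ≤ 1 + (j:ℝ) - k := by linarith
  have hXb : (1:ℝ) ≤ (1 + (j:ℝ) - k) ^ b := Real.one_le_rpow hX1 hb0
  rcases Nat.eq_zero_or_pos k with hk | hk
  · subst hk
    rcases Nat.eq_zero_or_pos j with hj | hj
    · subst hj
      have h1 : (1:ℝ) ≤ (2:ℝ) ^ b * M := by nlinarith
      have h2 : (1:ℝ) ≤ ((2:ℝ) ^ b * M) * (1 + ((0:ℕ):ℝ) - ((0:ℕ):ℝ)) ^ b := by nlinarith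
      exact le_mul_of_one_le_left (hpos 0).le h2
    · have h1 := key_lemma a hpos hanti c hc hc1 hdbl j 1 le_rfl hj
      have h2 : a 0 ≤ M * a 1 := by
        have h3 := mul_le_mul_of_nonneg_right (le_max_right (1:ℝ) (a 0 / a 1)) (hpos 1).le
        rw [div_mul_cancel₀ _ (hpos 1).ne'] at h3
        exact h3
      have hjpos : (0:ℝ) < (j:ℝ) := by exact_mod_cast hj
      have hmono' : (1 + (j:ℝ) - ((1:ℕ):ℝ)) ^ b ≤ (1 + (j:ℝ) - ((0:ℕ):ℝ)) ^ b := by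
        apply Real.rpow_le_rpow (by push_cast; linarith) (by push_cast; linarith) hb0
      calc a 0 ≤ M * a 1 := h2
        _ ≤ M * ((2:ℝ) ^ b * (1 + (j:ℝ) - ((1:ℕ):ℝ)) ^ b * a j) := by
            exact mul_le_mul_of_nonneg_left h1 (by linarith)
        _ = ((2:ℝ) ^ b * M) * (1 + (j:ℝ) - ((1:ℕ):ℝ)) ^ b * a j := by ring
        _ ≤ ((2:ℝ) ^ b * M) * (1 + (j:ℝ) - ((0:ℕ):ℝ)) ^ b * a j := by
            apply mul_le_mul_of_nonneg_right _ (hpos j).le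
            exact mul_le_mul_of_nonneg_left hmono' (by nlinarith)
  · have h1 := key_lemma a hpos hanti c hc hc1 hdbl j k hk hkj
    calc a k ≤ (2:ℝ) ^ b * (1 + (j:ℝ) - k) ^ b * a j := h1
      _ ≤ ((2:ℝ) ^ b * M) * (1 + (j:ℝ) - k) ^ b * a j := by
          apply mul_le_mul_of_nonneg_right _ (hpos j).le
          apply mul_le_mul_of_nonneg_right _ (by linarith)
          nlinarith

/-- Proposition 2.9 (Moura): growth comparison for admissible weights on dyadic values. -/
theorem stmt_0 (w : ℝ → ℝ)
    (hpos : ∀ t : ℝ, 0 < t → 0 < w t)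
    (hmono : MonotoneOn w (Set.Ioc (0:ℝ) 1) ∨ AntitoneOn w (Set.Ioc (0:ℝ) 1))
    (hconst : ∀ t : ℝ, 1 ≤ t → w t = w 1)
    (hadm : ∃ c > (0:ℝ), ∃ d > (0:ℝ), ∀ j : ℕ,
      c * w ((2:ℝ) ^ (-(j:ℝ))) ≤ w ((2:ℝ) ^ (-(2*j:ℝ))) ∧
      w ((2:ℝ) ^ (-(2*j:ℝ))) ≤ d * w ((2:ℝ) ^ (-(j:ℝ)))) :
    ∃ C₁ > (0:ℝ), ∃ C₂ > (0:ℝ), ∃ b ≥ (0:ℝ), ∀ j k : ℕ, k ≤ j →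
      C₁ * (1 + (j:ℝ) - (k:ℝ)) ^ (-b) ≤ w ((2:ℝ) ^ (-(j:ℝ))) / w ((2:ℝ) ^ (-(k:ℝ))) ∧
      w ((2:ℝ) ^ (-(j:ℝ))) / w ((2:ℝ) ^ (-(k:ℝ))) ≤ C₂ * (1 + (j:ℝ) - (k:ℝ)) ^ b := by
  obtain ⟨c, hc, d, hd, hadm'⟩ := hadm
  set a : ℕ → ℝ := fun n => w ((2:ℝ) ^ (-(n:ℝ))) with ha
  have hapos : ∀ n, 0 < a n := fun n => hpos _ (Real.rpow_pos_of_pos two_pos _)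
  have hmem : ∀ n : ℕ, (2:ℝ) ^ (-(n:ℝ)) ∈ Set.Ioc (0:ℝ) 1 := by
    intro n
    refine ⟨Real.rpow_pos_of_pos two_pos _, ?_⟩
    apply Real.rpow_le_one_of_one_le_of_nonpos one_le_two
    simp
  have hle : ∀ n m : ℕ, n ≤ m → (2:ℝ) ^ (-(m:ℝ)) ≤ (2:ℝ) ^ (-(n:ℝ)) := by
    intro n m h
    apply Real.rpow_le_rpow_of_exponent_le one_le_two
    have : (n:ℝ) ≤ (m:ℝ) := Nat.cast_le.mpr h
    linarith
  have hdbl_eq : ∀ n : ℕ, w ((2:ℝ) ^ (-(2 * (n:ℝ)))) = a (2 * n) := by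
    intro n
    rw [ha]
    congr 1
    push_cast
    ring
  rcases hmono with hmw | hanw
  · -- w monotone: a antitone
    have hanti : ∀ n m : ℕ, n ≤ m → a m ≤ a n :=
      fun n m h => hmw (hmem m) (hmem n) (hle n m h)
    set c' : ℝ := min c 1 with hc'def
    have hc' : 0 < c' := lt_min hc one_pos
    have hc'1 : c' ≤ 1 := min_le_right _ _
    have hdbl : ∀ n, c' * a n ≤ a (2 * n) := by
      intro n
      have h := (hadm' n).1
      rw [hdbl_eq n] at h
      have h2 : c' * a n ≤ c * a n :=
        mul_le_mul_of_nonneg_right (min_le_left _ _) (hapos n).le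
      exact h2.trans h
    set b : ℝ := Real.logb 2 c'⁻¹ with hbdef
    have hb0 : 0 ≤ b := Real.logb_nonneg one_lt_two (one_le_inv_iff₀.mpr ⟨hc', hc'1⟩)
    set K : ℝ := (2:ℝ) ^ b * max 1 (a 0 / a 1) with hKdef
    have hK : 0 < K := by
      apply mul_pos (Real.rpow_pos_of_pos two_pos _)
      exact lt_of_lt_of_le one_pos (le_max_left _ _)
    refine ⟨K⁻¹, inv_pos.mpr hK, 1, one_pos, b, hb0, ?_⟩
    intro j k hkj
    have hkey := key_lemma' a hapos hanti c' hc' hc'1 hdbl j k hkj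
    have hjk : (k:ℝ) ≤ (j:ℝ) := Nat.cast_le.mpr hkj
    have hX0 : (0:ℝ) ≤ 1 + (j:ℝ) - k := by linarith
    have hXb : (1:ℝ) ≤ (1 + (j:ℝ) - k) ^ b := Real.one_le_rpow (by linarith) hb0
    have hXbpos : (0:ℝ) < (1 + (j:ℝ) - k) ^ b := by linarith
    constructor
    · rw [Real.rpow_neg hX0, le_div_iff₀ (hapos k)]
      calc K⁻¹ * ((1 + (j:ℝ) - k) ^ b)⁻¹ * a k
          ≤ K⁻¹ * ((1 + (j:ℝ) - k) ^ b)⁻¹ * (K * (1 + (j:ℝ) - k) ^ b * a j) := by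
            apply mul_le_mul_of_nonneg_left hkey (by positivity)
        _ = a j := by field_simp
    · rw [div_le_iff₀ (hapos k), one_mul]
      have h1 : a j ≤ a k := hanti k j hkj
      nlinarith [hapos k, hapos j]
  · -- w antitone: a monotone
    have hmono2 : ∀ n m : ℕ, n ≤ m → a n ≤ a m :=
      fun n m h => hanw (hmem m) (hmem n) (hle n m h)
    set a' : ℕ → ℝ := fun n => (a n)⁻¹ with ha'
    have hapos' : ∀ n, 0 < a' n := fun n => inv_pos.mpr (hapos n)
    have hanti' : ∀ n m : ℕ, n ≤ m → a' m ≤ a' n := by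
      intro n m h
      exact inv_anti₀ (hapos n) (hmono2 n m h)
    set c' : ℝ := min d⁻¹ 1 with hc'def
    have hc' : 0 < c' := lt_min (inv_pos.mpr hd) one_pos
    have hc'1 : c' ≤ 1 := min_le_right _ _
    have hdbl : ∀ n, c' * a' n ≤ a' (2 * n) := by
      intro n
      have h := (hadm' n).2
      rw [hdbl_eq n] at h
      have h2 : (d * a n)⁻¹ ≤ (a (2 * n))⁻¹ :=
        inv_anti₀ (hapos (2 * n)) h
      have h3 : c' * a' n ≤ d⁻¹ * (a n)⁻¹ := by
        apply mul_le_mul_of_nonneg_right (min_le_left _ _) (hapos' n).le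
      rw [mul_inv] at h2
      exact h3.trans h2
    set b : ℝ := Real.logb 2 c'⁻¹ with hbdef
    have hb0 : 0 ≤ b := Real.logb_nonneg one_lt_two (one_le_inv_iff₀.mpr ⟨hc', hc'1⟩)
    set K : ℝ := (2:ℝ) ^ b * max 1 (a' 0 / a' 1) with hKdef
    have hK : 0 < K := by
      apply mul_pos (Real.rpow_pos_of_pos two_pos _)
      exact lt_of_lt_of_le one_pos (le_max_left _ _)
    refine ⟨1, one_pos, K, hK, b, hb0, ?_⟩
    intro j k hkj
    have hkey := key_lemma' a' hapos' hanti' c' hc' hc'1 hdbl j k hkj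
    have hjk : (k:ℝ) ≤ (j:ℝ) := Nat.cast_le.mpr hkj
    have hX0 : (0:ℝ) ≤ 1 + (j:ℝ) - k := by linarith
    have hXb : (1:ℝ) ≤ (1 + (j:ℝ) - k) ^ b := Real.one_le_rpow (by linarith) hb0
    constructor
    · rw [Real.rpow_neg hX0, one_mul]
      have h1 : ((1 + (j:ℝ) - k) ^ b)⁻¹ ≤ 1 := inv_le_one_of_one_le₀ hXb
      have h2 : 1 ≤ a j / a k := (one_le_div (hapos k)).mpr (hmono2 k j hkj)
      linarith
    · rw [div_le_iff₀ (hapos k)]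
      have haj := (hapos j).ne'
      have hak := (hapos k).ne'
      have hkey' : (a k)⁻¹ ≤ K * (1 + (j:ℝ) - k) ^ b * (a j)⁻¹ := hkey
      have h4 := mul_le_mul_of_nonneg_right hkey' (mul_pos (hapos j) (hapos k)).le
      have e1 : (a k)⁻¹ * (a j * a k) = a j := by
        field_simp
      have e2 : (K * (1 + (j:ℝ) - k) ^ b * (a j)⁻¹) * (a j * a k)
          = K * (1 + (j:ℝ) - k) ^ b * a k := by
        field_simp
      rw [e1, e2] at h4
      exact h4
end

section
/- For δ > 1/2 and n ≥ 1, let g_δ(ξ) := χ_{{|ξ|>e}}(ξ) / (|ξ|ⁿ (log|ξ|)^δ). Then for every ξ ∈ ℝⁿ with |ξ| ≥ 2e, the convolution satisfies the lower bound (g_δ * g_δ)(ξ) ≥ c · |ξ|^{-n} (log|ξ|)^{-δ} · ((log(|ξ| - e))^{1-δ} - 1)/(1 - δ) for some constant c > 0 depending only on n and δ. -/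
open MeasureTheory Set

private lemma aux_1d_stmt5 (δ : ℝ) (hδ1 : δ ≠ 1) (R : ℝ) (hR : Real.exp 1 ≤ R) :
    ∫ y in Set.Ioo (Real.exp 1) R, Real.log y ^ (-δ) * y⁻¹ =
      (Real.log R ^ (1 - δ) - 1) / (1 - δ) := by
  have hE1 : (1:ℝ) < Real.exp 1 := by
    have := Real.add_one_lt_exp (by norm_num : (1:ℝ) ≠ 0); linarith
  have key : ∀ x ∈ Set.uIcc (Real.exp 1) R, HasDerivAt
      (fun y => Real.log y ^ (1 - δ) / (1 - δ)) (Real.log x ^ (-δ) * x⁻¹) x := by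
    intro x hx
    rw [Set.uIcc_of_le hR] at hx
    have hx1 : (1:ℝ) < x := lt_of_lt_of_le hE1 hx.1
    have hlx : 1 ≤ Real.log x := by
      rw [Real.le_log_iff_exp_le (by linarith)]; exact hx.1
    have h1 : HasDerivAt Real.log x⁻¹ x := Real.hasDerivAt_log (by linarith)
    have h2 : HasDerivAt (fun u : ℝ => u ^ (1 - δ)) ((1 - δ) * Real.log x ^ (1 - δ - 1))
        (Real.log x) := Real.hasDerivAt_rpow_const (Or.inl (by linarith))
    have h3 := (h2.comp x h1).div_const (1 - δ)
    refine h3.congr_deriv ?_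
    have : (1:ℝ) - δ ≠ 0 := sub_ne_zero.2 fun h => hδ1 h.symm
    rw [show (1:ℝ) - δ - 1 = -δ by ring]
    rw [mul_assoc, mul_div_cancel_left₀ _ this]
  have hcont : IntervalIntegrable (fun y => Real.log y ^ (-δ) * y⁻¹) volume (Real.exp 1) R := by
    apply ContinuousOn.intervalIntegrable
    intro x hx
    rw [Set.uIcc_of_le hR] at hx
    have hx1 : (1:ℝ) < x := lt_of_lt_of_le hE1 hx.1
    have hlx : 0 < Real.log x := Real.log_pos hx1
    exact ((Real.continuousAt_log (by linarith)).rpow_const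
      (Or.inl hlx.ne')).continuousWithinAt.mul
      (continuousAt_inv₀ (by linarith : x ≠ 0)).continuousWithinAt
  have := intervalIntegral.integral_eq_sub_of_hasDerivAt key hcont
  rw [intervalIntegral.integral_of_le hR, integral_Ioc_eq_integral_Ioo] at this
  rw [this, Real.log_exp, Real.one_rpow, div_sub_div_same]

/-- Lower bound for the self-convolution of `g_δ` on `|ξ| ≥ 2e`. -/
theorem stmt_5 (n : ℕ) (hn : 1 ≤ n) (δ : ℝ) (hδ : 1/2 < δ)
    (g : EuclideanSpace ℝ (Fin n) → ℝ)
    (hg : ∀ ξ, g ξ = if Real.exp 1 < ‖ξ‖ then 1 / (‖ξ‖ ^ n * Real.log ‖ξ‖ ^ δ) else 0) :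
    ∃ c > (0:ℝ), ∀ ξ : EuclideanSpace ℝ (Fin n), 2 * Real.exp 1 ≤ ‖ξ‖ →
      c * ‖ξ‖ ^ (-(n:ℝ)) * Real.log ‖ξ‖ ^ (-δ) *
        ((Real.log (‖ξ‖ - Real.exp 1) ^ (1 - δ) - 1) / (1 - δ))
      ≤ ∫ η : EuclideanSpace ℝ (Fin n), g η * g (ξ - η) := by
  classical
  haveI : Nonempty (Fin n) := ⟨⟨0, hn⟩⟩
  have hE1 : (1:ℝ) < Real.exp 1 := by
    have := Real.add_one_lt_exp (by norm_num : (1:ℝ) ≠ 0); linarith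
  have hE0 : (0:ℝ) < Real.exp 1 := Real.exp_pos 1
  have hE2 : (2:ℝ) < Real.exp 1 := by
    have := Real.add_one_lt_exp (by norm_num : (1:ℝ) ≠ 0); linarith
  have hδ0 : (0:ℝ) < δ := by linarith
  have hnR : (0:ℝ) < n := by exact_mod_cast hn
  -- basic facts about g
  have hg0 : ∀ x : EuclideanSpace ℝ (Fin n), 0 ≤ g x := by
    intro x; rw [hg]
    split
    · rename_i h
      have h1 : (1:ℝ) < ‖x‖ := lt_trans hE1 h
      have hl : 0 < Real.log ‖x‖ := Real.log_pos h1
      positivity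
    · exact le_refl _
  have hgm : Measurable g := by
    have : g = fun x : EuclideanSpace ℝ (Fin n) =>
        if Real.exp 1 < ‖x‖ then 1 / (‖x‖ ^ n * Real.log ‖x‖ ^ δ) else 0 := funext hg
    rw [this]
    apply Measurable.ite
    · exact measurableSet_lt measurable_const measurable_norm
    · exact ((measurable_norm.pow_const n).mul
        ((Real.measurable_log.comp measurable_norm).pow_const δ)).const_div 1
    · exact measurable_const
  -- g ≤ 1
  have hgle1 : ∀ x : EuclideanSpace ℝ (Fin n), g x ≤ 1 := by
    intro x; rw [hg]
    split
    · rename_i h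
      have h1 : (1:ℝ) < ‖x‖ := lt_trans hE1 h
      have hl : (1:ℝ) ≤ Real.log ‖x‖ ^ δ :=
        Real.one_le_rpow ((Real.le_log_iff_exp_le (by linarith)).2 h.le) hδ0.le
      rw [div_le_one (by positivity)]
      have h2 : (1:ℝ) ≤ ‖x‖ ^ n := one_le_pow₀ h1.le
      nlinarith
    · norm_num
  -- g ^ 2 is integrable
  have hg2 : Integrable (fun x : EuclideanSpace ℝ (Fin n) => g x ^ 2) := by
    have h2n : (Module.finrank ℝ (EuclideanSpace ℝ (Fin n)) : ℝ) < (2 * n : ℝ) := by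
      rw [finrank_euclideanSpace_fin]; push_cast; nlinarith
    have hi : Integrable (fun x : EuclideanSpace ℝ (Fin n) => (1 + ‖x‖) ^ (-(2 * n : ℝ))) :=
      integrable_one_add_norm h2n
    refine ((hi.const_mul ((4:ℝ) ^ n)).mono'
      ((hgm.pow_const 2).aestronglyMeasurable) ?_)
    filter_upwards with x
    rw [Real.norm_eq_abs, abs_of_nonneg (by positivity)]
    rw [hg]
    split
    · rename_i h
      have h1 : (1:ℝ) < ‖x‖ := lt_trans hE1 h
      have hxpos : (0:ℝ) < ‖x‖ := by linarith
      have hl : (1:ℝ) ≤ Real.log ‖x‖ ^ δ :=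
        Real.one_le_rpow ((Real.le_log_iff_exp_le (by linarith)).2 h.le) hδ0.le
      have e1 : (1 + ‖x‖) ^ (-(2 * n : ℝ)) = ((1 + ‖x‖) ^ (2 * n : ℕ))⁻¹ := by
        rw [← Real.rpow_natCast (1 + ‖x‖) (2 * n), ← Real.rpow_neg (by positivity)]
        norm_num
      rw [e1]
      have key : (1 / (‖x‖ ^ n * Real.log ‖x‖ ^ δ)) ^ 2 ≤ (‖x‖ ^ (2 * n))⁻¹ := by
        rw [div_pow, one_pow, mul_pow, ← pow_mul, mul_comm n 2, one_div]
        have h2 : (1:ℝ) ≤ (Real.log ‖x‖ ^ δ) ^ 2 := one_le_pow₀ hl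
        apply inv_anti₀ (by positivity)
        nlinarith [pow_pos hxpos (2*n)]
      refine key.trans ?_
      have h3 : (1 + ‖x‖) ^ (2 * n) ≤ 4 ^ n * ‖x‖ ^ (2 * n) := by
        calc (1 + ‖x‖) ^ (2 * n) ≤ (2 * ‖x‖) ^ (2 * n) :=
              pow_le_pow_left₀ (by positivity) (by linarith) _
          _ = 4 ^ n * ‖x‖ ^ (2 * n) := by
              rw [mul_pow, pow_mul]; norm_num
      calc (‖x‖ ^ (2 * n))⁻¹ = 4 ^ n * (4 ^ n * ‖x‖ ^ (2 * n))⁻¹ := by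
            rw [mul_inv]
            rw [← mul_assoc, mul_inv_cancel₀ (by positivity : ((4:ℝ) ^ n) ≠ 0), one_mul]
        _ ≤ 4 ^ n * ((1 + ‖x‖) ^ (2 * n))⁻¹ := by
            gcongr
    · rw [zero_pow (by norm_num : 2 ≠ 0)]
      positivity
  -- the convolution integrand is integrable
  have hF_int : ∀ ξ : EuclideanSpace ℝ (Fin n),
      Integrable (fun η => g η * g (ξ - η)) := by
    intro ξ
    have h2 : Integrable (fun η : EuclideanSpace ℝ (Fin n) => g (ξ - η) ^ 2) :=
      hg2.comp_sub_left ξ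
    refine (hg2.add h2).mono'
      ((hgm.mul (hgm.comp (measurable_const.sub measurable_id))).aestronglyMeasurable) ?_
    filter_upwards with η
    rw [Real.norm_eq_abs, abs_of_nonneg (mul_nonneg (hg0 _) (hg0 _)), Pi.add_apply]
    nlinarith [sq_nonneg (g η - g (ξ - η)), hg0 η, hg0 (ξ - η)]
  -- the constant
  have hvol : 0 < (volume (Metric.ball (0 : EuclideanSpace ℝ (Fin n)) 1)).toReal := by
    refine ENNReal.toReal_pos ?_ measure_ball_lt_top.ne
    exact (Metric.measure_ball_pos volume (0 : EuclideanSpace ℝ (Fin n)) one_pos).ne'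
  set vol : ℝ := (volume (Metric.ball (0 : EuclideanSpace ℝ (Fin n)) 1)).toReal with hvoldef
  refine ⟨(n * vol) * (2:ℝ) ^ (-(n:ℝ) - δ), by positivity, ?_⟩
  intro ξ hξ
  by_cases hδ1 : δ = 1
  · have hz : (Real.log (‖ξ‖ - Real.exp 1) ^ (1 - δ) - 1) / (1 - δ) = 0 := by
      rw [hδ1]; simp
    rw [hz, mul_zero]
    exact integral_nonneg fun η => mul_nonneg (hg0 _) (hg0 _)
  -- main case
  set R : ℝ := ‖ξ‖ - Real.exp 1 with hRdef
  have hξpos : (0:ℝ) < ‖ξ‖ := by linarith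
  have hRE : Real.exp 1 ≤ R := by rw [hRdef]; linarith
  have hRξ : R < ‖ξ‖ := by rw [hRdef]; linarith
  have hlogξ : (1:ℝ) ≤ Real.log ‖ξ‖ := by
    rw [Real.le_log_iff_exp_le hξpos]; linarith
  set K : ℝ := (2:ℝ) ^ (-(n:ℝ) - δ) * ‖ξ‖ ^ (-(n:ℝ)) * Real.log ‖ξ‖ ^ (-δ) with hKdef
  have hK0 : 0 ≤ K := by
    have h1 : (0:ℝ) < Real.log ‖ξ‖ := by linarith
    positivity
  set S : Set (EuclideanSpace ℝ (Fin n)) := (fun η => ‖η‖) ⁻¹' (Set.Ioo (Real.exp 1) R)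
    with hSdef
  have hSm : MeasurableSet S := measurable_norm measurableSet_Ioo
  -- pointwise lower bound on g (ξ - η) for η ∈ S
  have hKg : ∀ η ∈ S, K ≤ g (ξ - η) := by
    intro η hη
    obtain ⟨hη1, hη2⟩ : Real.exp 1 < ‖η‖ ∧ ‖η‖ < R := hη
    have ha1 : Real.exp 1 < ‖ξ - η‖ := by
      have h := norm_sub_norm_le ξ η
      rw [hRdef] at hη2
      linarith
    have ha2 : ‖ξ - η‖ ≤ 2 * ‖ξ‖ := by
      have := norm_sub_le ξ η
      linarith
    have hapos : (0:ℝ) < ‖ξ - η‖ := by linarith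
    have hla : (0:ℝ) ≤ Real.log ‖ξ - η‖ :=
      (Real.log_nonneg (by linarith))
    have hlog2 : Real.log (2 * ‖ξ‖) ≤ 2 * Real.log ‖ξ‖ := by
      rw [Real.log_mul (by norm_num) hξpos.ne']
      have : Real.log 2 ≤ 1 := by
        rw [Real.log_le_iff_le_exp (by norm_num)]
        linarith
      linarith
    have hla2 : Real.log ‖ξ - η‖ ≤ 2 * Real.log ‖ξ‖ :=
      le_trans (Real.log_le_log hapos ha2) hlog2
    rw [hg]
    rw [if_pos ha1]
    have hden : ‖ξ - η‖ ^ n * Real.log ‖ξ - η‖ ^ δ ≤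
        (2 * ‖ξ‖) ^ n * (2 * Real.log ‖ξ‖) ^ δ := by
      gcongr
    have hdenpos : (0:ℝ) < ‖ξ - η‖ ^ n * Real.log ‖ξ - η‖ ^ δ := by
      have h1 : (1:ℝ) < ‖ξ - η‖ := by linarith
      have : (0:ℝ) < Real.log ‖ξ - η‖ := Real.log_pos h1
      positivity
    have hKval : K = 1 / ((2 * ‖ξ‖) ^ n * (2 * Real.log ‖ξ‖) ^ δ) := by
      rw [hKdef]
      have hL : (0:ℝ) < Real.log ‖ξ‖ := by linarith
      rw [Real.mul_rpow (by norm_num) hL.le, mul_pow,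
        Real.rpow_sub (by norm_num : (0:ℝ) < 2), Real.rpow_neg (by norm_num : (0:ℝ) ≤ 2),
        Real.rpow_neg hξpos.le, Real.rpow_neg hL.le,
        ← Real.rpow_natCast (2:ℝ) n, ← Real.rpow_natCast ‖ξ‖ n]
      have p1 : (0:ℝ) < (2:ℝ) ^ (n:ℝ) := Real.rpow_pos_of_pos two_pos _
      have p2 : (0:ℝ) < (2:ℝ) ^ δ := Real.rpow_pos_of_pos two_pos _
      have p3 : (0:ℝ) < ‖ξ‖ ^ (n:ℝ) := Real.rpow_pos_of_pos hξpos _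
      have p4 : (0:ℝ) < Real.log ‖ξ‖ ^ δ := Real.rpow_pos_of_pos hL _
      field_simp
    rw [hKval]
    exact one_div_le_one_div_of_le hdenpos hden
  -- integrability of g on S
  have hgS : IntegrableOn g S volume := by
    have hSsub : S ⊆ Metric.ball (0 : EuclideanSpace ℝ (Fin n)) (R + 1) := by
      intro η hη
      obtain ⟨hη1, hη2⟩ : Real.exp 1 < ‖η‖ ∧ ‖η‖ < R := hη
      simp only [Metric.mem_ball, dist_zero_right]
      linarith
    refine Measure.integrableOn_of_bounded (M := 1) ?_ hgm.aestronglyMeasurable ?_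
    · exact ne_top_of_le_ne_top measure_ball_lt_top.ne (measure_mono hSsub)
    · filter_upwards with x
      rw [Real.norm_eq_abs, abs_of_nonneg (hg0 x)]
      exact hgle1 x
  -- step 1 : restrict to S
  have step1 : ∫ η in S, g η * g (ξ - η) ≤ ∫ η, g η * g (ξ - η) :=
    setIntegral_le_integral (hF_int ξ)
      (Filter.Eventually.of_forall fun η => mul_nonneg (hg0 _) (hg0 _))
  -- step 2 : lower bound on S
  have step2 : K * ∫ η in S, g η ≤ ∫ η in S, g η * g (ξ - η) := by
    rw [← integral_const_mul]
    refine setIntegral_mono_on (hgS.const_mul K) ((hF_int ξ).integrableOn) hSm ?_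
    intro η hη
    rw [mul_comm]
    exact mul_le_mul_of_nonneg_left (hKg η hη) (hg0 η)
  -- step 3 : compute the set integral of g via polar coordinates
  set f : ℝ → ℝ := (Set.Ioo (Real.exp 1) R).indicator
    (fun r => 1 / (r ^ n * Real.log r ^ δ)) with hfdef
  have hind : ∀ η : EuclideanSpace ℝ (Fin n), S.indicator g η = f ‖η‖ := by
    intro η
    rw [hfdef]
    by_cases hη : ‖η‖ ∈ Set.Ioo (Real.exp 1) R
    · rw [Set.indicator_of_mem hη, Set.indicator_of_mem (by exact hη : η ∈ S), hg,
        if_pos hη.1]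
    · rw [Set.indicator_of_notMem hη, Set.indicator_of_notMem (by exact hη : η ∉ S)]
  have hinner : ∫ y in Set.Ioi (0:ℝ), y ^ (n-1) • f y =
      (Real.log R ^ (1-δ) - 1)/(1-δ) := by
    have hins : (fun y : ℝ => y ^ (n-1) • f y) =
        fun y => (Set.Ioo (Real.exp 1) R).indicator
          (fun y => y ^ (n-1) * (1 / (y ^ n * Real.log y ^ δ))) y := by
      funext y
      rw [hfdef]
      by_cases hy : y ∈ Set.Ioo (Real.exp 1) R
      · rw [Set.indicator_of_mem hy, Set.indicator_of_mem hy, smul_eq_mul]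
      · rw [Set.indicator_of_notMem hy, Set.indicator_of_notMem hy, smul_zero]
    rw [hins, setIntegral_indicator measurableSet_Ioo,
      show Set.Ioi (0:ℝ) ∩ Set.Ioo (Real.exp 1) R = Set.Ioo (Real.exp 1) R from
        Set.inter_eq_right.2 (fun y hy => lt_trans hE0 hy.1),
      setIntegral_congr_fun measurableSet_Ioo
        (g := fun y => Real.log y ^ (-δ) * y⁻¹) ?_]
    · exact aux_1d_stmt5 δ hδ1 R hRE
    · intro y hy
      have hy1 : (1:ℝ) < y := lt_trans hE1 hy.1
      have hy0 : (0:ℝ) < y := by linarith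
      have hyL : (0:ℝ) < Real.log y := Real.log_pos hy1
      have hyLd : (0:ℝ) < Real.log y ^ δ := Real.rpow_pos_of_pos hyL δ
      have hpow : y ^ n = y ^ (n-1) * y := by
        conv_lhs => rw [show n = (n-1)+1 from (Nat.succ_pred_eq_of_pos hn).symm]
        rw [pow_succ]
      show y ^ (n-1) * (1 / (y ^ n * Real.log y ^ δ)) = Real.log y ^ (-δ) * y⁻¹
      rw [hpow, Real.rpow_neg hyL.le]
      have h1 : y ^ (n-1) ≠ 0 := (pow_pos hy0 _).ne'
      field_simp
  have step3 : ∫ η in S, g η = (n : ℝ) * vol * ((Real.log R ^ (1-δ) - 1)/(1-δ)) := by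
    rw [← integral_indicator hSm]
    calc ∫ η, S.indicator g η = ∫ η : EuclideanSpace ℝ (Fin n), f ‖η‖ := by
          congr 1; exact funext hind
      _ = n • vol • ∫ y in Set.Ioi (0:ℝ), y ^ (n-1) • f y := by
          have := MeasureTheory.integral_fun_norm_addHaar
            (volume : Measure (EuclideanSpace ℝ (Fin n))) f
          simpa [finrank_euclideanSpace_fin, hvoldef, measureReal_def] using this
      _ = (n:ℝ) * vol * ((Real.log R ^ (1-δ) - 1)/(1-δ)) := by
          rw [hinner, nsmul_eq_mul, smul_eq_mul, mul_assoc]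
  -- assemble
  calc (n * vol) * (2:ℝ) ^ (-(n:ℝ) - δ) * ‖ξ‖ ^ (-(n:ℝ)) * Real.log ‖ξ‖ ^ (-δ) *
        ((Real.log R ^ (1 - δ) - 1) / (1 - δ))
      = K * ((n:ℝ) * vol * ((Real.log R ^ (1-δ) - 1)/(1-δ))) := by
        rw [hKdef]; ring
    _ = K * ∫ η in S, g η := by rw [step3]
    _ ≤ ∫ η in S, g η * g (ξ - η) := step2
    _ ≤ ∫ η, g η * g (ξ - η) := step1
end
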